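/- arXiv:1006.0808 — 2 statements merged into one kernel-verified Lean document; each statement's English description precedes it below -/
import Mathlib

section
/- In a ring with D, U satisfying DU − UD = 1, and for a natural number parameter l, Σ_{k=0}^{n} C(n+l,k) C(n+l,k+l) D^k U^n D^{n−k} = Σ_{j=0}^{n} C(n,j) · ((n+l)!/(n+l−j)!) · C(2n+2l−j, n−j) · U^{n−j} D^{n−j}. -/
/-!
Left multiplication by `D` splits as right multiplication by `D` plus `ad D`, and these two
operators commute, so the binomial theorem gives the normal ordering
`D ^ k * U ^ n = ∑ j, C(k, j) • (ad D) ^ j (U ^ n) * D ^ (k - j)`. Since `⁅D, U⁆ = 1`, `ad D` acts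
on powers of `U` as differentiation, `(ad D) ^ j (U ^ n) = n⁽ʲ⁾ • U ^ (n - j)` with the falling
factorial `n⁽ʲ⁾`. Collecting the coefficient of `U ^ (n - j) * D ^ (n - j)` leaves a sum of
products of three binomial coefficients, which `C(N, k) * C(k, j) = C(N, j) * C(N - j, k - j)` and Vandermonde's
identity evaluate.
-/

open Finset

theorem Nat.choose_mul_descFactorial_comm (m n j : ℕ) :
    m.choose j * n.descFactorial j = n.choose j * m.descFactorial j := by
  rw [Nat.descFactorial_eq_factorial_mul_choose, Nat.descFactorial_eq_factorial_mul_choose]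
  ring

theorem Nat.sum_range_choose_mul_choose_mul_choose {N n j : ℕ} (hjn : j ≤ n) (hjN : j ≤ N) :
    ∑ k ∈ range (n + 1), N.choose k * k.choose j * N.choose (n - k) =
      N.choose j * (2 * N - j).choose (n - j) := by
  rw [show n + 1 = j + (n - j + 1) by omega, sum_range_add, sum_eq_zero fun k hk => by
    rw [Nat.choose_eq_zero_of_lt (mem_range.1 hk), mul_zero, zero_mul], zero_add]
  have hvandermonde : (2 * N - j).choose (n - j) =
      ∑ a ∈ range (n - j + 1), (N - j).choose a * N.choose (n - j - a) := by
    rw [show 2 * N - j = N - j + N by omega, Nat.add_choose_eq,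
      Nat.sum_antidiagonal_eq_sum_range_succ_mk]
  rw [hvandermonde, mul_sum]
  refine sum_congr rfl fun a _ => ?_
  rw [Nat.choose_mul (Nat.le_add_right j a), Nat.add_sub_cancel_left, Nat.sub_sub, mul_assoc]

theorem Nat.sum_range_choose_mul_choose_add_mul_choose {n j : ℕ} (l : ℕ) (hj : j ≤ n) :
    ∑ k ∈ range (n + 1), (n + l).choose k * (n + l).choose (k + l) * k.choose j =
      (n + l).choose j * (2 * n + 2 * l - j).choose (n - j) := by
  rw [show 2 * n + 2 * l = 2 * (n + l) by ring,
    ← Nat.sum_range_choose_mul_choose_mul_choose hj (by omega)]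
  refine sum_congr rfl fun k hk => ?_
  rw [Nat.choose_symm_of_eq_add (show n + l = k + l + (n - k) by grind)]
  ring

section AdjointAction

attribute [local instance] LieRing.ofAssociativeRing

open LieAlgebra

variable {A : Type*} [Ring A]

theorem pow_mul_eq_sum_choose_smul_ad_pow (D x : A) (k : ℕ) :
    D ^ k * x = ∑ j ∈ range (k + 1), k.choose j • ((ad ℤ A D ^ j) x * D ^ (k - j)) := by
  have hsplit : LinearMap.mulLeft ℤ D = ad ℤ A D + LinearMap.mulRight ℤ D := by
    rw [ad_eq_lmul_left_sub_lmul_right, Pi.sub_apply, sub_add_cancel]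
  have hcomm : Commute (ad ℤ A D) (LinearMap.mulRight ℤ D) := by
    rw [ad_eq_lmul_left_sub_lmul_right]
    exact (LinearMap.commute_mulLeft_right D D).sub_left (Commute.refl _)
  have hbinomial := congr($(hcomm.add_pow k) x)
  rw [← hsplit, LinearMap.pow_mulLeft, LinearMap.mulLeft_apply] at hbinomial
  rw [hbinomial, LinearMap.sum_apply]
  refine sum_congr rfl fun j _ => ?_
  rw [← nsmul_eq_mul', (hcomm.pow_pow j (k - j)).eq, LinearMap.smul_apply, Module.End.mul_apply,
    LinearMap.pow_mulRight, LinearMap.mulRight_apply]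

variable {D U : A}

theorem ad_apply_pow_of_lie_eq_one (h : ⁅D, U⁆ = 1) (n : ℕ) :
    ad ℤ A D (U ^ n) = n • U ^ (n - 1) := by
  induction n with
  | zero => simp [LieRing.of_associative_ring_bracket]
  | succ n ih =>
    have hleibniz : ⁅D, U ^ n * U⁆ = ⁅D, U ^ n⁆ * U + U ^ n * ⁅D, U⁆ := by
      simp only [LieRing.of_associative_ring_bracket]
      noncomm_ring
    rw [ad_apply] at ih ⊢
    rw [pow_succ, hleibniz, ih, h, mul_one, smul_mul_assoc, Nat.add_sub_cancel, succ_nsmul]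
    rcases n with _ | n
    · simp
    · rw [Nat.add_sub_cancel, ← pow_succ]

theorem ad_pow_apply_pow_of_lie_eq_one (h : ⁅D, U⁆ = 1) (n j : ℕ) :
    (ad ℤ A D ^ j) (U ^ n) = n.descFactorial j • U ^ (n - j) := by
  induction j with
  | zero => simp
  | succ j ih =>
    rw [pow_succ', Module.End.mul_apply, ih, map_nsmul, ad_apply_pow_of_lie_eq_one h,
      smul_smul, Nat.descFactorial_succ, mul_comm, Nat.sub_sub]

theorem pow_mul_pow_eq_sum_of_lie_eq_one (h : ⁅D, U⁆ = 1) (k n : ℕ) :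
    D ^ k * U ^ n =
      ∑ j ∈ range (k + 1), (k.choose j * n.descFactorial j) • (U ^ (n - j) * D ^ (k - j)) := by
  rw [pow_mul_eq_sum_choose_smul_ad_pow]
  refine sum_congr rfl fun j _ => ?_
  rw [ad_pow_apply_pow_of_lie_eq_one h, smul_mul_assoc, smul_smul]

theorem pow_mul_pow_mul_pow_sub_eq_sum_of_lie_eq_one (h : ⁅D, U⁆ = 1) {k n : ℕ} (hk : k ≤ n) :
    D ^ k * U ^ n * D ^ (n - k) =
      ∑ j ∈ range (n + 1), (k.choose j * n.descFactorial j) • (U ^ (n - j) * D ^ (n - j)) := by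
  calc _ = ∑ j ∈ range (k + 1),
          (k.choose j * n.descFactorial j) • (U ^ (n - j) * D ^ (n - j)) := by
        rw [pow_mul_pow_eq_sum_of_lie_eq_one h, sum_mul]
        refine sum_congr rfl fun j hj => ?_
        rw [smul_mul_assoc, mul_assoc, ← pow_add, add_comm,
          Nat.sub_add_sub_cancel hk (Nat.lt_succ_iff.mp (mem_range.1 hj))]
    _ = _ := sum_subset (range_subset_range.2 (by omega)) fun j _ hj => by
        rw [Nat.choose_eq_zero_of_lt (by simpa using hj), zero_mul, zero_smul]

end AdjointAction

open Finset in
theorem stmt_14 {A : Type*} [Ring A] (D U : A) (h : D * U - U * D = 1) (n l : ℕ) :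
    ∑ k ∈ range (n + 1), (((n + l).choose k * (n + l).choose (k + l) : ℕ) : A) *
        (D ^ k * U ^ n * D ^ (n - k)) =
    ∑ j ∈ range (n + 1),
      ((n.choose j * (n + l).descFactorial j * (2 * n + 2 * l - j).choose (n - j) : ℕ) : A) *
        (U ^ (n - j) * D ^ (n - j)) := by
  simp only [← nsmul_eq_mul]
  calc _ = ∑ k ∈ range (n + 1), ∑ j ∈ range (n + 1),
          ((n + l).choose k * (n + l).choose (k + l) * (k.choose j * n.descFactorial j)) •
            (U ^ (n - j) * D ^ (n - j)) := by
        refine sum_congr rfl fun k hk => ?_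
        rw [pow_mul_pow_mul_pow_sub_eq_sum_of_lie_eq_one h
          (Nat.lt_succ_iff.mp (mem_range.1 hk)), smul_sum]
        simp only [smul_smul]
    _ = _ := by
        rw [sum_comm]
        refine sum_congr rfl fun j hj => ?_
        rw [← sum_smul]
        simp only [← mul_assoc, ← sum_mul]
        rw [Nat.sum_range_choose_mul_choose_add_mul_choose l
          (Nat.lt_succ_iff.mp (mem_range.1 hj)), mul_right_comm, Nat.choose_mul_descFactorial_comm]
end

section
/- In a ring with D, U satisfying DU − UD = 1, Σ_{k=0}^{n} C(n,k) D^k U^n D^{n−k} = Σ_{k=0}^{n} (−1)^k C(n,k) (n!/k!) Π_{j=0}^{k−1} (−x + 2j + 1), where x := DU + UD = 2UD + 1. -/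
/-!
Let `L` and `R` be left and right multiplication by `D` on `A`. They commute, so the left-hand
side is `(L + R) ^ n` applied to `U ^ n`. Writing `L + R = 2 • R + ad D`, with `R` and `ad D`
commuting, and using `(ad D) ^ i (U ^ n) = n(n-1)⋯(n-i+1) • U ^ (n - i)` (because `[D, U] = 1`),
the left-hand side becomes `∑ C(n,k) 2^k (n!/k!) U^k D^k`. On the right-hand side,
`-x + 2j + 1 = -2 (UD - j)` and `U^k D^k (UD - k) = U^(k+1) D^(k+1)`, so the `k`-th product
equals `(-2)^k U^k D^k`.
-/

section

open Finset LinearMap LieAlgebra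

attribute [local instance] LieRing.ofAssociativeRing LieAlgebra.ofAssociativeAlgebra

variable {A : Type*} [Ring A]

theorem sum_choose_mul_pow_mul_mul_pow (a x : A) (n : ℕ) :
    ∑ k ∈ range (n + 1), (n.choose k : A) * (a ^ k * x * a ^ (n - k)) =
      ∑ k ∈ range (n + 1), (n.choose k * 2 ^ k) • ((ad ℤ A a ^ (n - k)) x * a ^ k) := by
  have hLR : mulLeft ℤ a + mulRight ℤ a = 2 • mulRight ℤ a + ad ℤ A a := by
    rw [ad_eq_lmul_left_sub_lmul_right, Pi.sub_apply, two_nsmul]; abel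
  have hRad : Commute (2 • mulRight ℤ a) (ad ℤ A a) := by
    rw [ad_eq_lmul_left_sub_lmul_right]
    exact ((commute_mulLeft_right a a).symm.sub_right (Commute.refl _)).smul_left 2
  calc _ = ((mulLeft ℤ a + mulRight ℤ a) ^ n) x := by
        rw [(commute_mulLeft_right a a).add_pow, LinearMap.sum_apply]
        refine sum_congr rfl fun k _ => ?_
        simp only [Module.End.mul_apply, pow_mulLeft, pow_mulRight, mulLeft_apply,
          mulRight_apply, Module.End.natCast_apply, nsmul_eq_mul, mul_assoc]
        exact (Nat.cast_commute _ _).left_comm _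
    _ = _ := by
        rw [hLR, hRad.add_pow, LinearMap.sum_apply]
        refine sum_congr rfl fun k _ => ?_
        simp only [Module.End.mul_apply, smul_pow, pow_mulRight, LinearMap.smul_apply,
          mulRight_apply, Module.End.natCast_apply, map_nsmul, smul_smul]

variable {D U : A}

theorem ad_apply_pow_of_mul_sub_mul_eq_one (h : D * U - U * D = 1) (m : ℕ) :
    ad ℤ A D (U ^ m) = m • U ^ (m - 1) := by
  rw [ad_apply, LieRing.of_associative_ring_bracket]
  induction m with
  | zero => simp
  | succ m ih =>
    calc D * U ^ (m + 1) - U ^ (m + 1) * D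
          = (D * U ^ m - U ^ m * D) * U + U ^ m * (D * U - U * D) := by noncomm_ring
      _ = (m + 1) • U ^ m := by
          rw [ih, h, mul_one, smul_mul_assoc, succ_nsmul]
          rcases m with _ | m
          · simp
          · rw [Nat.add_sub_cancel, ← pow_succ]

theorem ad_pow_apply_pow_of_mul_sub_mul_eq_one (h : D * U - U * D = 1) (i n : ℕ) :
    (ad ℤ A D ^ i) (U ^ n) = n.descFactorial i • U ^ (n - i) := by
  induction i with
  | zero => simp
  | succ i ih =>
    rw [pow_succ', Module.End.mul_apply, ih, map_nsmul, ad_apply_pow_of_mul_sub_mul_eq_one h,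
      smul_smul, Nat.sub_sub, Nat.descFactorial_succ, mul_comm]

theorem pow_mul_mul_of_mul_sub_mul_eq_one (h : D * U - U * D = 1) (k : ℕ) :
    D ^ k * (U * D) = (U * D + k) * D ^ k := by
  induction k with
  | zero => simp
  | succ k ih =>
    rw [pow_succ', mul_assoc, ih, ← mul_assoc, mul_add, ← mul_assoc, sub_eq_iff_eq_add.mp h,
      ← (Nat.cast_commute k D).eq]
    push_cast
    noncomm_ring

theorem pow_mul_pow_mul_sub_of_mul_sub_mul_eq_one (h : D * U - U * D = 1) (k : ℕ) :
    U ^ k * D ^ k * (U * D - k) = U ^ (k + 1) * D ^ (k + 1) := by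
  rw [mul_assoc, mul_sub, pow_mul_mul_of_mul_sub_mul_eq_one h, add_mul,
    ← (Nat.cast_commute k (D ^ k)).eq, add_sub_cancel_right, mul_assoc U, ← pow_succ',
    ← mul_assoc, ← pow_succ]

theorem list_prod_range_of_mul_sub_mul_eq_one (h : D * U - U * D = 1) (k : ℕ) :
    ((List.range k).map (fun j : ℕ => -(D * U + U * D) + 2 * (j : A) + 1)).prod =
      (-2) ^ k * (U ^ k * D ^ k) := by
  induction k with
  | zero => simp
  | succ k ih =>
    have hfactor : -(D * U + U * D) + 2 * (k : A) + 1 = -2 * (U * D - k) := by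
      rw [sub_eq_iff_eq_add.mp h]; noncomm_ring
    rw [List.range_succ, List.map_append, List.prod_append, ih, List.map_singleton,
      List.prod_singleton, hfactor, pow_succ, ← pow_mul_pow_mul_sub_of_mul_sub_mul_eq_one h k]
    noncomm_ring

end

open Finset in
theorem stmt_18 {A : Type*} [Ring A] [Algebra ℚ A] (D U : A) (h : D * U - U * D = 1) (n : ℕ) :
    ∑ k ∈ range (n + 1), (n.choose k : A) * (D ^ k * U ^ n * D ^ (n - k)) =
    ∑ k ∈ range (n + 1),
      algebraMap ℚ A ((-1 : ℚ) ^ k * (n.choose k : ℚ) * ((n.factorial : ℚ) / (k.factorial : ℚ))) *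
        ((List.range k).map (fun j : ℕ => -(D * U + U * D) + 2 * (j : A) + 1)).prod := by
  rw [sum_choose_mul_pow_mul_mul_pow]
  refine sum_congr rfl fun k hk => ?_
  have hkn : k ≤ n := Nat.lt_succ_iff.mp (mem_range.mp hk)
  have hfac : (k.factorial : ℚ) * n.descFactorial (n - k) = n.factorial := by
    exact_mod_cast Nat.sub_sub_self hkn ▸ Nat.factorial_mul_descFactorial (n.sub_le k)
  rw [ad_pow_apply_pow_of_mul_sub_mul_eq_one h, Nat.sub_sub_self hkn, smul_mul_assoc, smul_smul,
    list_prod_range_of_mul_sub_mul_eq_one h, ← mul_assoc, nsmul_eq_mul,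
    ← map_natCast (algebraMap ℚ A), ← map_ofNat (algebraMap ℚ A) 2, ← map_neg, ← map_pow,
    ← map_mul]
  congr 2
  push_cast
  rw [← hfac]
  field_simp
  rw [mul_assoc, ← mul_pow]
  norm_num
end
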